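/- arXiv:2006.07279 — 3 statements merged into one kernel-verified Lean document; each statement's English description precedes it below -/
import Mathlib

section
/- Let ψ : ℝ⁺ → ℝ⁺ be a softening function, s > 0, and suppose 0 ≤ ℓ(h,z) ≤ K(h) for all z. Then for every h: R(h) - R_{ψ,s}(h) ≤ K(h)·1{K(h) ≥ s}, where R(h) = E_{z∼μ}[ℓ(h,z)] and R_{ψ,s}(h) = E_{z∼μ}[s·ψ(ℓ(h,z)/s)]. Consequently, integrating over h against any probability measure Q with E_{h∼Q}[K(h)] < ∞: E_{h∼Q}[R(h)] ≤ E_{h∼Q}[R_{ψ,s}(h)] + E_{h∼Q}[K(h)·1{K(h) ≥ s}]. -/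
open MeasureTheory

/-! Where the loss stays below `s`, the softened loss `s * ψ (ℓ / s)` equals the loss, so the
two risks agree whenever `K h < s`; otherwise the risk is at most `K h` and the softened risk is
nonnegative. Since `0 ≤ s * ψ (ℓ / s) ≤ ℓ ≤ K`, both risks are dominated by `K`, which makes
every function of `h` involved `Q`-integrable, and the pointwise bound integrates. -/

section Softening

variable {ψ : ℝ → ℝ} {s x : ℝ}

lemma softening_eq_self (hs : 0 < s) (hψid : ∀ x ∈ Set.Icc (0 : ℝ) 1, ψ x = x)
    (hx : 0 ≤ x) (hxs : x ≤ s) : s * ψ (x / s) = x := by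
  rw [hψid _ ⟨div_nonneg hx hs.le, (div_le_one hs).2 hxs⟩, mul_div_cancel₀ _ hs.ne']

lemma softening_le_self (hs : 0 < s) (hψid : ∀ x ∈ Set.Icc (0 : ℝ) 1, ψ x = x)
    (hψle : ∀ x ≥ (1 : ℝ), ψ x ≤ x) (hx : 0 ≤ x) : s * ψ (x / s) ≤ x := by
  rcases le_total x s with hxs | hsx
  · exact (softening_eq_self hs hψid hx hxs).le
  · calc s * ψ (x / s) ≤ s * (x / s) :=
          mul_le_mul_of_nonneg_left (hψle _ ((le_div_iff₀ hs).2 (by linarith))) hs.le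
      _ = x := mul_div_cancel₀ _ hs.ne'

lemma softening_nonneg (hs : 0 ≤ s) (hψpos : ∀ x ≥ (0 : ℝ), 0 ≤ ψ x) (hx : 0 ≤ x) :
    0 ≤ s * ψ (x / s) :=
  mul_nonneg hs (hψpos _ (div_nonneg hx hs))

end Softening

section Integrals

variable {Z : Type*} [MeasurableSpace Z] {μ : Measure Z} [IsProbabilityMeasure μ]

lemma integral_le_of_nonneg_of_le {f : Z → ℝ} {k : ℝ} (hf0 : ∀ z, 0 ≤ f z)
    (hfk : ∀ z, f z ≤ k) : ∫ z, f z ∂μ ≤ k := by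
  simpa using integral_mono_of_nonneg (μ := μ) (Filter.Eventually.of_forall hf0)
    (integrable_const k) (Filter.Eventually.of_forall hfk)

lemma integral_sub_integral_softening_le {ψ : ℝ → ℝ} {s k : ℝ} {f : Z → ℝ} (hs : 0 < s)
    (hψid : ∀ x ∈ Set.Icc (0 : ℝ) 1, ψ x = x) (hψpos : ∀ x ≥ (0 : ℝ), 0 ≤ ψ x)
    (hf0 : ∀ z, 0 ≤ f z) (hfk : ∀ z, f z ≤ k) :
    (∫ z, f z ∂μ) - (∫ z, s * ψ (f z / s) ∂μ) ≤ if s ≤ k then k else 0 := by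
  split_ifs with hsk
  · have hsoft : 0 ≤ ∫ z, s * ψ (f z / s) ∂μ :=
      integral_nonneg fun z => softening_nonneg hs.le hψpos (hf0 z)
    linarith [integral_le_of_nonneg_of_le (μ := μ) hf0 hfk]
  · have hsoft : ∀ z, s * ψ (f z / s) = f z := fun z =>
      softening_eq_self hs hψid (hf0 z) (by linarith [hfk z])
    simp only [hsoft, sub_self, le_refl]

variable {H : Type*} [MeasurableSpace H] {Q : Measure H}

lemma integrable_integral_of_nonneg_of_le {F : H → Z → ℝ} {K : H → ℝ}
    (hF : Measurable (Function.uncurry F)) (hF0 : ∀ h z, 0 ≤ F h z)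
    (hFK : ∀ h z, F h z ≤ K h) (hK : Integrable K Q) :
    Integrable (fun h => ∫ z, F h z ∂μ) Q := by
  refine hK.mono' hF.stronglyMeasurable.integral_prod_right.aestronglyMeasurable
    (Filter.Eventually.of_forall fun h => ?_)
  rw [Real.norm_eq_abs, abs_of_nonneg (integral_nonneg (hF0 h))]
  exact integral_le_of_nonneg_of_le (hF0 h) (hFK h)

end Integrals

lemma MeasureTheory.Integrable.ite_le_self {H : Type*} [MeasurableSpace H] {Q : Measure H} {K : H → ℝ}
    (hK : Integrable K Q) (s : ℝ) : Integrable (fun h => if s ≤ K h then K h else 0) Q := by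
  have hmeas : Measurable fun x : ℝ => if s ≤ x then x else 0 :=
    Measurable.ite measurableSet_Ici measurable_id measurable_const
  refine hK.mono (hmeas.comp_aemeasurable hK.aemeasurable).aestronglyMeasurable
    (Filter.Eventually.of_forall fun h => ?_)
  split_ifs <;> simp

theorem statement6_general {Z : Type*} [MeasurableSpace Z] {H : Type*} [MeasurableSpace H]
    (μ : Measure Z) [IsProbabilityMeasure μ]
    (ℓ : H → Z → ℝ) (K : H → ℝ) (ψ : ℝ → ℝ) (s : ℝ) (hs : 0 < s)
    (hmeas : Measurable (Function.uncurry ℓ))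
    (hψmeas : Measurable ψ)
    (hψid : ∀ x ∈ Set.Icc (0 : ℝ) 1, ψ x = x)
    (hψle : ∀ x ≥ (1 : ℝ), ψ x ≤ x)
    (hψpos : ∀ x ≥ (0 : ℝ), 0 ≤ ψ x)
    (hℓpos : ∀ h z, 0 ≤ ℓ h z) (hℓK : ∀ h z, ℓ h z ≤ K h) :
    (∀ h : H,
      (∫ z, ℓ h z ∂μ) - (∫ z, s * ψ (ℓ h z / s) ∂μ)
        ≤ (if s ≤ K h then K h else 0)) ∧
    (∀ Q : Measure H, IsProbabilityMeasure Q → Integrable K Q →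
      (∫ h, ∫ z, ℓ h z ∂μ ∂Q)
        ≤ (∫ h, ∫ z, s * ψ (ℓ h z / s) ∂μ ∂Q)
          + ∫ h, (if s ≤ K h then K h else 0) ∂Q) := by
  have hgap : ∀ h, (∫ z, ℓ h z ∂μ) - (∫ z, s * ψ (ℓ h z / s) ∂μ)
      ≤ if s ≤ K h then K h else 0 := fun h =>
    integral_sub_integral_softening_le hs hψid hψpos (hℓpos h) (hℓK h)
  refine ⟨hgap, fun Q _ hKQ => ?_⟩
  have hsoft0 : ∀ h z, 0 ≤ s * ψ (ℓ h z / s) := fun h z =>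
    softening_nonneg hs.le hψpos (hℓpos h z)
  have hsoftK : ∀ h z, s * ψ (ℓ h z / s) ≤ K h := fun h z =>
    (softening_le_self hs hψid hψle (hℓpos h z)).trans (hℓK h z)
  have hrisk := integrable_integral_of_nonneg_of_le (μ := μ) hmeas hℓpos hℓK hKQ
  have hsoftrisk := integrable_integral_of_nonneg_of_le (μ := μ)
    ((hψmeas.comp (hmeas.div_const s)).const_mul s) hsoft0 hsoftK hKQ
  have htail := hKQ.ite_le_self s
  calc (∫ h, ∫ z, ℓ h z ∂μ ∂Q)
      ≤ ∫ h, ((∫ z, s * ψ (ℓ h z / s) ∂μ) + if s ≤ K h then K h else 0) ∂Q :=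
        integral_mono hrisk (hsoftrisk.add htail) fun h => by linarith [hgap h]
    _ = _ := integral_add hsoftrisk htail

/-- softening comparison lemma. For a softening function ψ and s > 0,
R(h) - R_{ψ,s}(h) ≤ K(h)·1{K(h) ≥ s} for every h; integrating against any probability
measure Q with E_Q[K] < ∞ gives E_Q[R] ≤ E_Q[R_{ψ,s}] + E_Q[K·1{K ≥ s}]. -/
theorem statement6 {Z : Type*} [MeasurableSpace Z] {H : Type*} [MeasurableSpace H]
    (μ : Measure Z) [IsProbabilityMeasure μ]
    (ℓ : H → Z → ℝ) (K : H → ℝ) (ψ : ℝ → ℝ) (s : ℝ) (hs : 0 < s)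
    (hmeas : Measurable (Function.uncurry ℓ)) (hKmeas : Measurable K)
    (hψmeas : Measurable ψ)
    (hψid : ∀ x ∈ Set.Icc (0 : ℝ) 1, ψ x = x)
    (hψmono : MonotoneOn ψ (Set.Ici (0 : ℝ)))
    (hψle : ∀ x ≥ (1 : ℝ), ψ x ≤ x)
    (hψpos : ∀ x ≥ (0 : ℝ), 0 ≤ ψ x)
    (hℓpos : ∀ h z, 0 ≤ ℓ h z) (hℓK : ∀ h z, ℓ h z ≤ K h) :
    (∀ h : H,
      (∫ z, ℓ h z ∂μ) - (∫ z, s * ψ (ℓ h z / s) ∂μ)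
        ≤ (if s ≤ K h then K h else 0)) ∧
    (∀ Q : Measure H, IsProbabilityMeasure Q → Integrable K Q →
      (∫ h, ∫ z, ℓ h z ∂μ ∂Q)
        ≤ (∫ h, ∫ z, s * ψ (ℓ h z / s) ∂μ ∂Q)
          + ∫ h, (if s ≤ K h then K h else 0) ∂Q) :=
  statement6_general μ ℓ K ψ s hs hmeas hψmeas hψid hψle hψpos hℓpos hℓK
end

section
/- Let ψ be a softening function, s > 0, and suppose 0 ≤ ℓ(h,z) ≤ K(h) for all z with E_μ[ℓ(h,z)²] ≤ K(h)². Then for every h: R(h) - R_{ψ,s}(h) ≤ K(h)³/s². Hence for any probability measure Q on H with sup_Q E_{h∼Q}[K(h)³] ≤ M₃ < ∞, E_{h∼Q}[R(h)] ≤ E_{h∼Q}[R_{ψ,s}(h)] + M_{3,s}/s², where M_{3,s} = sup_Q E_{h∼Q}[K(h)³ 1{K(h) ≥ s}]. -/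
open MeasureTheory

/-- softening comparison lemma with third-moment control. For a softening
function ψ and s > 0, with E_μ[ℓ²] ≤ K(h)², one has R(h) - R_{ψ,s}(h) ≤ K(h)³/s²;
and if sup_Q E_Q[K³] ≤ M₃ < ∞ then, with M_{3,s} = sup_Q E_Q[K³ 1{K ≥ s}],
E_Q[R] ≤ E_Q[R_{ψ,s}] + M_{3,s}/s² for every posterior Q. -/
theorem statement7 {Z : Type*} [MeasurableSpace Z] {H : Type*} [MeasurableSpace H]
    [Nonempty H]
    (μ : Measure Z) [IsProbabilityMeasure μ]
    (ℓ : H → Z → ℝ) (K : H → ℝ) (ψ : ℝ → ℝ) (s : ℝ) (hs : 0 < s)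
    (hmeas : Measurable (Function.uncurry ℓ)) (hKmeas : Measurable K)
    (hψmeas : Measurable ψ)
    (hψid : ∀ x ∈ Set.Icc (0 : ℝ) 1, ψ x = x)
    (hψmono : MonotoneOn ψ (Set.Ici (0 : ℝ)))
    (hψle : ∀ x ≥ (1 : ℝ), ψ x ≤ x)
    (hψpos : ∀ x ≥ (0 : ℝ), 0 ≤ ψ x)
    (hℓpos : ∀ h z, 0 ≤ ℓ h z) (hℓK : ∀ h z, ℓ h z ≤ K h)
    (hℓ2 : ∀ h : H, ∫ z, (ℓ h z) ^ 2 ∂μ ≤ (K h) ^ 2)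
    (M₃ : ℝ)
    (hM₃ : ∀ Q : Measure H, IsProbabilityMeasure Q → ∫ h, (K h) ^ 3 ∂Q ≤ M₃) :
    (∀ h : H,
      (∫ z, ℓ h z ∂μ) - (∫ z, s * ψ (ℓ h z / s) ∂μ) ≤ (K h) ^ 3 / s ^ 2) ∧
    (∀ M3s : ℝ,
      (∀ Q : Measure H, IsProbabilityMeasure Q →
          ∫ h, (if s ≤ K h then (K h) ^ 3 else 0) ∂Q ≤ M3s) →
      ∀ Q : Measure H, IsProbabilityMeasure Q →
        (∫ h, ∫ z, ℓ h z ∂μ ∂Q)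
          ≤ (∫ h, ∫ z, s * ψ (ℓ h z / s) ∂μ ∂Q) + M3s / s ^ 2) := by
  have hZ : Nonempty Z := μ.nonempty_of_neZero
  have hK0 : ∀ h, 0 ≤ K h := fun h =>
    (hℓpos h (Classical.arbitrary Z)).trans (hℓK h (Classical.arbitrary Z))
  -- measurability in z
  have hmz : ∀ h, Measurable (fun z => ℓ h z) := fun h =>
    hmeas.comp measurable_prodMk_left
  have hmψ : ∀ h, Measurable (fun z => s * ψ (ℓ h z / s)) := fun h =>
    (hψmeas.comp ((hmz h).div_const s)).const_mul s
  -- pointwise: s * ψ (ℓ/s) between 0 and ℓ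
  have hψlo : ∀ h z, 0 ≤ s * ψ (ℓ h z / s) := fun h z =>
    mul_nonneg hs.le (hψpos _ (div_nonneg (hℓpos h z) hs.le))
  have hψhi : ∀ h z, s * ψ (ℓ h z / s) ≤ ℓ h z := by
    intro h z
    rcases le_or_gt (ℓ h z) s with hls | hls
    · rw [hψid (ℓ h z / s) ⟨div_nonneg (hℓpos h z) hs.le, (div_le_one hs).2 hls⟩]
      rw [mul_div_cancel₀ _ hs.ne']
    · have h1 : (1 : ℝ) ≤ ℓ h z / s := (one_le_div hs).2 hls.le
      calc s * ψ (ℓ h z / s) ≤ s * (ℓ h z / s) := by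
            exact mul_le_mul_of_nonneg_left (hψle _ h1) hs.le
        _ = ℓ h z := mul_div_cancel₀ _ hs.ne'
  -- integrability in z
  have hintℓ : ∀ h, Integrable (fun z => ℓ h z) μ := by
    intro h
    refine (integrable_const (K h)).mono' (hmz h).aestronglyMeasurable ?_
    filter_upwards with z
    rw [Real.norm_eq_abs, abs_of_nonneg (hℓpos h z)]
    exact hℓK h z
  have hintψ : ∀ h, Integrable (fun z => s * ψ (ℓ h z / s)) μ := by
    intro h
    refine (integrable_const (K h)).mono' (hmψ h).aestronglyMeasurable ?_
    filter_upwards with z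
    rw [Real.norm_eq_abs, abs_of_nonneg (hψlo h z)]
    exact (hψhi h z).trans (hℓK h z)
  have hintℓ2 : ∀ h, Integrable (fun z => (ℓ h z) ^ 2) μ := by
    intro h
    refine (integrable_const ((K h) ^ 2)).mono' ((hmz h).pow_const 2).aestronglyMeasurable ?_
    filter_upwards with z
    rw [Real.norm_eq_abs, abs_of_nonneg (sq_nonneg _)]
    exact pow_le_pow_left₀ (hℓpos h z) (hℓK h z) 2
  -- part 1
  have part1 : ∀ h : H,
      (∫ z, ℓ h z ∂μ) - (∫ z, s * ψ (ℓ h z / s) ∂μ) ≤ (K h) ^ 3 / s ^ 2 := by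
    intro h
    have hpt : ∀ z, ℓ h z - s * ψ (ℓ h z / s) ≤ K h * (ℓ h z) ^ 2 / s ^ 2 := by
      intro z
      rcases le_or_gt (ℓ h z) s with hls | hls
      · rw [hψid (ℓ h z / s) ⟨div_nonneg (hℓpos h z) hs.le, (div_le_one hs).2 hls⟩,
          mul_div_cancel₀ _ hs.ne', sub_self]
        have := hK0 h
        positivity
      · have : ℓ h z - s * ψ (ℓ h z / s) ≤ K h := by
          have := hψlo h z
          nlinarith [hℓK h z]
        refine this.trans ?_
        have h1 : s ^ 2 ≤ (ℓ h z) ^ 2 := by nlinarith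
        rw [le_div_iff₀ (by positivity)]
        nlinarith [hK0 h]
    calc (∫ z, ℓ h z ∂μ) - (∫ z, s * ψ (ℓ h z / s) ∂μ)
        = ∫ z, (ℓ h z - s * ψ (ℓ h z / s)) ∂μ := (integral_sub (hintℓ h) (hintψ h)).symm
      _ ≤ ∫ z, K h * (ℓ h z) ^ 2 / s ^ 2 ∂μ := by
          refine integral_mono ((hintℓ h).sub (hintψ h)) ?_ hpt
          exact ((hintℓ2 h).const_mul (K h)).div_const (s ^ 2)
      _ = (K h / s ^ 2) * ∫ z, (ℓ h z) ^ 2 ∂μ := by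
          rw [← integral_const_mul]
          congr 1 with z; ring
      _ ≤ (K h / s ^ 2) * (K h) ^ 2 := by
          exact mul_le_mul_of_nonneg_left (hℓ2 h) (div_nonneg (hK0 h) (sq_nonneg s))
      _ = (K h) ^ 3 / s ^ 2 := by ring
  refine ⟨part1, ?_⟩
  intro M3s hM3s Q hQ
  -- K is uniformly bounded: K h ≤ max 1 M₃
  have hKbd : ∀ h, K h ≤ max 1 M₃ := by
    intro h
    have hd : IsProbabilityMeasure (Measure.dirac h) := by infer_instance
    have := hM₃ (Measure.dirac h) hd
    rw [integral_dirac' _ _ ((hKmeas.pow_const 3).stronglyMeasurable)] at this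
    rcases le_or_gt (K h) 1 with h1 | h1
    · exact h1.trans (le_max_left _ _)
    · refine le_trans ?_ (le_max_right 1 M₃)
      nlinarith [mul_nonneg (mul_nonneg (hK0 h) (by linarith : (0:ℝ) ≤ K h - 1))
        (by linarith : (0:ℝ) ≤ K h + 1)]
  -- per-h bound in terms of the indicator
  have key : ∀ h : H, (∫ z, ℓ h z ∂μ) ≤
      (∫ z, s * ψ (ℓ h z / s) ∂μ) + (if s ≤ K h then (K h) ^ 3 else 0) / s ^ 2 := by
    intro h
    by_cases hc : s ≤ K h
    · rw [if_pos hc]; linarith [part1 h]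
    · rw [if_neg hc]
      push_neg at hc
      have : ∀ z, ℓ h z = s * ψ (ℓ h z / s) := by
        intro z
        rw [hψid (ℓ h z / s) ⟨div_nonneg (hℓpos h z) hs.le,
          (div_le_one hs).2 ((hℓK h z).trans hc.le)⟩, mul_div_cancel₀ _ hs.ne']
      simp only [zero_div, add_zero]
      exact le_of_eq (integral_congr_ae (Filter.Eventually.of_forall this))
  -- measurability in h
  have hF : StronglyMeasurable fun h => ∫ z, ℓ h z ∂μ :=
    hmeas.stronglyMeasurable.integral_prod_right'
  have hG : StronglyMeasurable fun h => ∫ z, s * ψ (ℓ h z / s) ∂μ := by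
    have : Measurable (fun p : H × Z => s * ψ (ℓ p.1 p.2 / s)) :=
      (hψmeas.comp (hmeas.div_const s)).const_mul s
    exact this.stronglyMeasurable.integral_prod_right'
  -- integrability over Q
  have hintF : Integrable (fun h => ∫ z, ℓ h z ∂μ) Q := by
    refine (integrable_const (max 1 M₃)).mono' hF.aestronglyMeasurable ?_
    filter_upwards with h
    rw [Real.norm_eq_abs, abs_of_nonneg (integral_nonneg (fun z => hℓpos h z))]
    calc (∫ z, ℓ h z ∂μ) ≤ ∫ _ : Z, K h ∂μ := integral_mono (hintℓ h) (integrable_const _) (hℓK h)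
      _ = K h := by simp
      _ ≤ max 1 M₃ := hKbd h
  have hintG : Integrable (fun h => ∫ z, s * ψ (ℓ h z / s) ∂μ) Q := by
    refine (integrable_const (max 1 M₃)).mono' hG.aestronglyMeasurable ?_
    filter_upwards with h
    rw [Real.norm_eq_abs, abs_of_nonneg (integral_nonneg (fun z => hψlo h z))]
    calc (∫ z, s * ψ (ℓ h z / s) ∂μ) ≤ ∫ _ : Z, K h ∂μ :=
          integral_mono (hintψ h) (integrable_const _) (fun z => (hψhi h z).trans (hℓK h z))
      _ = K h := by simp
      _ ≤ max 1 M₃ := hKbd h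
  have hindmeas : Measurable fun h => (if s ≤ K h then (K h) ^ 3 else 0 : ℝ) := by
    exact Measurable.ite (measurableSet_le measurable_const hKmeas) (hKmeas.pow_const 3)
      measurable_const
  have hintInd : Integrable (fun h => (if s ≤ K h then (K h) ^ 3 else 0 : ℝ)) Q := by
    refine (integrable_const ((max 1 M₃) ^ 3)).mono' hindmeas.aestronglyMeasurable ?_
    filter_upwards with h
    rw [Real.norm_eq_abs]
    split
    · rw [abs_of_nonneg (pow_nonneg (hK0 h) 3)]
      exact pow_le_pow_left₀ (hK0 h) ((hKbd h)) 3
    · rw [abs_zero]; positivity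
  calc (∫ h, ∫ z, ℓ h z ∂μ ∂Q)
      ≤ ∫ h, ((∫ z, s * ψ (ℓ h z / s) ∂μ) + (if s ≤ K h then (K h) ^ 3 else 0) / s ^ 2) ∂Q := by
        exact integral_mono hintF (hintG.add (hintInd.div_const (s ^ 2))) key
    _ = (∫ h, ∫ z, s * ψ (ℓ h z / s) ∂μ ∂Q)
        + (∫ h, (if s ≤ K h then (K h) ^ 3 else 0) ∂Q) / s ^ 2 := by
        rw [integral_add hintG (hintInd.div_const (s ^ 2)), integral_div]
    _ ≤ (∫ h, ∫ z, s * ψ (ℓ h z / s) ∂μ ∂Q) + M3s / s ^ 2 := by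
        have := hM3s Q hQ
        gcongr
end

section
/- Fix a predictor h with 0 ≤ ℓ(h,z) ≤ K(h) for all z (K(h) > 0), let S be an i.i.d. size-m sample and Δ(h) = R(h) - R_m(h). Then for any α ∈ ℝ with m^{1-α}/(2K(h)²) ≠ 1: E_S[exp(m^α Δ(h)²)] ≤ 1 + (2/(1 - m^{1-α}/(2K(h)²)))·(exp(m^α K(h)² - m/2) - 1). -/
/-!
Hoeffding's inequality gives `P(u ≤ |Δ|) ≤ 2 exp(-m u² / (2K²))`. For `W = exp(m^α Δ²)`
and `t ≥ 1` the event `t ≤ W` is `√(log t / m^α) ≤ |Δ|`, so `P(t ≤ W) ≤ 2 t^(-c)` with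
`c = m^(1-α) / (2K²)`. Since `0 < W ≤ T := exp(m^α K²)`, the layer-cake formula
`E[W] = ∫₀^T P(t ≤ W) dt` bounds `E[W]` by `1 + ∫₁^T 2 t^(-c) dt`,
and `T^(1-c) = exp(m^α K² - m/2)`.
-/
open MeasureTheory ProbabilityTheory Finset Real Set
open scoped NNReal

lemma measureReal_le_abs_sum_le_of_iIndepFun {Ω ι : Type*} [MeasurableSpace Ω]
    {μ : Measure Ω} [IsFiniteMeasure μ] {X : ι → Ω → ℝ} (h_indep : iIndepFun X μ)
    {c : ℝ≥0} {s : Finset ι}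
    (h_subG : ∀ i ∈ s, HasSubgaussianMGF (X i) c μ) {ε : ℝ} (hε : 0 ≤ ε) :
    μ.real {ω | ε ≤ |∑ i ∈ s, X i ω|} ≤ 2 * exp (-ε ^ 2 / (2 * (#s * c))) := by
  have h_upper := HasSubgaussianMGF.measure_sum_ge_le_of_iIndepFun h_indep h_subG hε
  have h_lower := HasSubgaussianMGF.measure_sum_ge_le_of_iIndepFun
    (h_indep.comp (fun _ => Neg.neg) fun _ => measurable_neg) (fun i hi => (h_subG i hi).neg) hε
  have h_sub : {ω | ε ≤ |∑ i ∈ s, X i ω|} ⊆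
      {ω | ε ≤ ∑ i ∈ s, X i ω} ∪ {ω | ε ≤ ∑ i ∈ s, (Neg.neg ∘ X i) ω} := by
    intro ω hω
    simpa [le_abs, sum_neg_distrib] using hω
  simp only [sum_const, nsmul_eq_mul] at h_upper h_lower
  calc μ.real {ω | ε ≤ |∑ i ∈ s, X i ω|}
      ≤ μ.real {ω | ε ≤ ∑ i ∈ s, X i ω}
          + μ.real {ω | ε ≤ ∑ i ∈ s, (Neg.neg ∘ X i) ω} :=
        (measureReal_mono h_sub).trans (measureReal_union_le _ _)
    _ ≤ 2 * exp (-ε ^ 2 / (2 * (#s * c))) := by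
        push_cast at h_upper h_lower
        linarith

lemma measureReal_le_abs_integral_sub_sampleMean_le {Z : Type*} [MeasurableSpace Z]
    (μ : Measure Z) [IsProbabilityMeasure μ] {f : Z → ℝ} (hf : Measurable f) {K : ℝ}
    (hK : 0 < K) (hf_nonneg : ∀ z, 0 ≤ f z) (hf_le : ∀ z, f z ≤ K) {m : ℕ} (hm : 0 < m)
    {u : ℝ} (hu : 0 ≤ u) :
    (Measure.pi fun _ : Fin m => μ).real
        {S | u ≤ |(∫ z, f z ∂μ) - (1 / (m : ℝ)) * ∑ i, f (S i)|}
      ≤ 2 * exp (-((m : ℝ) / (2 * K ^ 2)) * u ^ 2) := by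
  have hm' : (0 : ℝ) < m := Nat.cast_pos.2 hm
  have h_subG : HasSubgaussianMGF (fun z => f z - μ[f]) ((‖K - 0‖₊ / 2) ^ 2) μ :=
    hasSubgaussianMGF_of_mem_Icc hf.aemeasurable (ae_of_all _ fun z => ⟨hf_nonneg z, hf_le z⟩)
  have h_hoeffding := measureReal_le_abs_sum_le_of_iIndepFun
    (iIndepFun_pi (μ := fun _ : Fin m => μ) fun _ => (hf.sub_const (μ[f])).aemeasurable)
    (s := univ) (fun i _ => .of_map (measurable_pi_apply i).aemeasurable
      (by rwa [(measurePreserving_eval (fun _ : Fin m => μ) i).map_eq])) (mul_nonneg hm'.le hu)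
  have h_sum : ∀ S : Fin m → Z,
      ∑ i, (f (S i) - μ[f]) = -(m * (μ[f] - (1 / (m : ℝ)) * ∑ i, f (S i))) := by
    intro S
    rw [sum_sub_distrib, sum_const, card_univ, Fintype.card_fin, nsmul_eq_mul]
    field_simp
    ring
  simp only [h_sum, abs_neg, abs_mul, Nat.abs_cast, mul_le_mul_iff_right₀ hm'] at h_hoeffding
  refine h_hoeffding.trans ?_
  gcongr
  -- Hoeffding's lemma on `[0, K]` gives variance proxy `K² / 4`; the stated rate is a quarter
  -- of the resulting one.
  have h_param : ((‖K - 0‖₊ / 2) ^ 2 : ℝ≥0) = (K ^ 2 / 4 : ℝ) := by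
    push_cast
    rw [sub_zero, norm_of_nonneg hK.le]
    ring
  have h_rate : 0 ≤ (m : ℝ) / (2 * K ^ 2) * u ^ 2 := by positivity
  rw [card_univ, Fintype.card_fin, h_param]
  calc -(m * u) ^ 2 / (2 * (m * (K ^ 2 / 4))) = -(4 * ((m : ℝ) / (2 * K ^ 2) * u ^ 2)) := by
        field_simp
    _ ≤ -((m : ℝ) / (2 * K ^ 2)) * u ^ 2 := by linarith

lemma abs_integral_sub_sampleMean_le {Z : Type*} [MeasurableSpace Z] (μ : Measure Z)
    [IsProbabilityMeasure μ] {f : Z → ℝ} {K : ℝ} (hf_nonneg : ∀ z, 0 ≤ f z)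
    (hf_le : ∀ z, f z ≤ K) {m : ℕ} (hm : 0 < m) (S : Fin m → Z) :
    |(∫ z, f z ∂μ) - (1 / (m : ℝ)) * ∑ i, f (S i)| ≤ K := by
  have h_integral_le : ∫ z, f z ∂μ ≤ K :=
    (integral_mono_of_nonneg (ae_of_all _ hf_nonneg) (integrable_const K)
      (ae_of_all _ hf_le)).trans_eq (by simp)
  have h_mean_le : (1 / (m : ℝ)) * ∑ i, f (S i) ≤ K := by
    rw [one_div, inv_mul_le_iff₀ (Nat.cast_pos.2 hm)]
    simpa using sum_le_sum (s := univ) fun i _ => hf_le (S i)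
  exact abs_sub_le_of_nonneg_of_le (integral_nonneg hf_nonneg) h_integral_le
    (mul_nonneg (by positivity) (sum_nonneg fun i _ => hf_nonneg (S i))) h_mean_le

lemma measureReal_le_exp_mul_sq_le_rpow {Ω : Type*} [MeasurableSpace Ω] {μ : Measure Ω}
    [IsFiniteMeasure μ] {g : Ω → ℝ} {A B C : ℝ} (hA : 0 < A)
    (h_tail : ∀ u, 0 ≤ u → μ.real {ω | u ≤ |g ω|} ≤ C * exp (-B * u ^ 2)) {t : ℝ}
    (ht : 1 ≤ t) :
    μ.real {ω | t ≤ exp (A * g ω ^ 2)} ≤ C * t ^ (-(B / A)) := by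
  have ht_pos : 0 < t := zero_lt_one.trans_le ht
  have h_level : 0 ≤ log t / A := div_nonneg (log_nonneg ht) hA.le
  have h_sub : {ω | t ≤ exp (A * g ω ^ 2)} ⊆ {ω | √(log t / A) ≤ |g ω|} := by
    intro ω hω
    rw [mem_ofPred_eq, ← log_le_iff_le_exp ht_pos, ← div_le_iff₀' hA] at hω
    rw [mem_ofPred_eq, ← sqrt_sq_eq_abs]
    exact sqrt_le_sqrt hω
  calc μ.real {ω | t ≤ exp (A * g ω ^ 2)} ≤ μ.real {ω | √(log t / A) ≤ |g ω|} :=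
        measureReal_mono h_sub
    _ ≤ C * exp (-B * √(log t / A) ^ 2) := h_tail _ (sqrt_nonneg _)
    _ = C * t ^ (-(B / A)) := by
        rw [sq_sqrt h_level, rpow_def_of_pos ht_pos]
        ring_nf

lemma integral_le_of_measureReal_le_rpow {α : Type*} [MeasurableSpace α] {μ : Measure α}
    [IsProbabilityMeasure μ] {f : α → ℝ} (hf : Integrable f μ) (hf_nonneg : ∀ x, 0 ≤ f x)
    {T : ℝ} (hf_le : ∀ x, f x ≤ T) (hT : 1 ≤ T) {C c : ℝ} (hc : c ≠ 1)
    (h_tail : ∀ t ∈ Ioc 1 T, μ.real {x | t ≤ f x} ≤ C * t ^ (-c)) :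
    ∫ x, f x ∂μ ≤ 1 + C * ((T ^ (1 - c) - 1) / (1 - c)) := by
  set F : ℝ → ℝ := fun t => μ.real {x | t ≤ f x}
  have hF_int : ∀ a b, a ≤ b → IntegrableOn F (Ioc a b) := fun a b hab =>
    (intervalIntegrable_iff_integrableOn_Ioc_of_le hab).1 <|
      Antitone.intervalIntegrable fun s t hst => measureReal_mono fun x hx => hst.trans hx
  have h_rpow_int : IntegrableOn (fun t : ℝ => C * t ^ (-c)) (Ioc 1 T) :=
    (intervalIntegrable_iff_integrableOn_Ioc_of_le hT).1 <|
      (intervalIntegral.intervalIntegrable_rpow (Or.inr (by simp [uIcc_of_le hT]))).const_mul C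
  calc ∫ x, f x ∂μ = ∫ t in Ioc 0 T, F t :=
        hf.integral_eq_integral_Ioc_meas_le (ae_of_all _ hf_nonneg) (ae_of_all _ hf_le)
    _ = (∫ t in Ioc 0 1, F t) + ∫ t in Ioc 1 T, F t := by
        rw [← setIntegral_union (Ioc_disjoint_Ioc_of_le le_rfl) measurableSet_Ioc
          (hF_int 0 1 zero_le_one) (hF_int 1 T hT), Ioc_union_Ioc_eq_Ioc zero_le_one hT]
    _ ≤ (∫ _ in Ioc (0 : ℝ) 1, (1 : ℝ)) + ∫ t in Ioc 1 T, C * t ^ (-c) :=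
        add_le_add
          (setIntegral_mono_on (hF_int 0 1 zero_le_one)
            (integrableOn_const measure_Ioc_lt_top.ne) measurableSet_Ioc
            fun _ _ => measureReal_le_one)
          (setIntegral_mono_on (hF_int 1 T hT) h_rpow_int measurableSet_Ioc h_tail)
    _ = 1 + C * ((T ^ (1 - c) - 1) / (1 - c)) := by
        rw [← intervalIntegral.integral_of_le hT, intervalIntegral.integral_const_mul,
          integral_rpow (Or.inr ⟨by contrapose! hc; linarith, by simp [uIcc_of_le hT]⟩)]
        simp [neg_add_eq_sub]

/-- naive exponential moment bound via tail integrals: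
E_S[exp(m^α Δ(h)²)] ≤ 1 + (2/(1 - m^{1-α}/(2K(h)²)))(exp(m^α K(h)² - m/2) - 1). -/
theorem statement13 {Z : Type*} [MeasurableSpace Z] {H : Type*}
    (μ : Measure Z) [IsProbabilityMeasure μ]
    (m : ℕ) (hm : 0 < m) (ℓ : H → Z → ℝ) (K : H → ℝ) (h : H)
    (hmeas : Measurable (ℓ h)) (hK : 0 < K h)
    (hℓpos : ∀ z : Z, 0 ≤ ℓ h z) (hℓK : ∀ z : Z, ℓ h z ≤ K h) (α : ℝ)
    (hne : (m : ℝ) ^ ((1 : ℝ) - α) / (2 * K h ^ 2) ≠ 1) :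
    ∫ S : Fin m → Z,
        Real.exp ((m : ℝ) ^ α *
          ((∫ z, ℓ h z ∂μ) - (1 / (m : ℝ)) * ∑ i : Fin m, ℓ h (S i)) ^ 2)
      ∂(Measure.pi fun _ : Fin m => μ)
      ≤ 1 + (2 / (1 - (m : ℝ) ^ ((1 : ℝ) - α) / (2 * K h ^ 2)))
            * (Real.exp ((m : ℝ) ^ α * K h ^ 2 - (m : ℝ) / 2) - 1) := by
  have hm' : (0 : ℝ) < m := Nat.cast_pos.2 hm
  have hA : 0 < (m : ℝ) ^ α := rpow_pos_of_pos hm' α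
  have h_rpow : (m : ℝ) ^ α * (m : ℝ) ^ (1 - α) = m := by
    rw [← rpow_add hm', add_sub_cancel, rpow_one]
  set c := (m : ℝ) ^ ((1 : ℝ) - α) / (2 * K h ^ 2)
  set Δ : (Fin m → Z) → ℝ := fun S =>
    (∫ z, ℓ h z ∂μ) - (1 / (m : ℝ)) * ∑ i, ℓ h (S i)
  have hΔ : ∀ S, |Δ S| ≤ K h := abs_integral_sub_sampleMean_le μ hℓpos hℓK hm
  have hW_le : ∀ S, exp ((m : ℝ) ^ α * Δ S ^ 2) ≤ exp ((m : ℝ) ^ α * K h ^ 2) := fun S =>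
    exp_le_exp.2 <| mul_le_mul_of_nonneg_left (sq_le_sq.2 ((hΔ S).trans (le_abs_self _))) hA.le
  have hW_int :
      Integrable (fun S => exp ((m : ℝ) ^ α * Δ S ^ 2)) (Measure.pi fun _ : Fin m => μ) :=
    .of_bound (by fun_prop) _
      (ae_of_all _ fun S => (norm_of_nonneg (exp_pos _).le).trans_le (hW_le S))
  have h_tail : ∀ t ∈ Ioc 1 (exp ((m : ℝ) ^ α * K h ^ 2)),
      (Measure.pi fun _ : Fin m => μ).real {S | t ≤ exp ((m : ℝ) ^ α * Δ S ^ 2)}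
        ≤ 2 * t ^ (-c) := by
    intro t ht
    convert measureReal_le_exp_mul_sq_le_rpow hA (fun u hu =>
      measureReal_le_abs_integral_sub_sampleMean_le μ hmeas hK hℓpos hℓK hm hu) ht.1.le using 3
    simp only [c, rpow_sub hm', rpow_one]
    ring
  have h_bound := integral_le_of_measureReal_le_rpow hW_int (fun S => (exp_pos _).le) hW_le
    (one_le_exp (by positivity)) hne h_tail
  have h_exponent : (m : ℝ) ^ α * K h ^ 2 * (1 - c) = (m : ℝ) ^ α * K h ^ 2 - m / 2 := by
    simp only [c]
    field_simp
    linear_combination -h_rpow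
  rw [← exp_mul, h_exponent] at h_bound
  exact h_bound.trans_eq (by ring)
end
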